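/- Let V ∈ C¹(ℝⁿ, ℝ) satisfy: (i) V'(q)·q ≥ μ₁V(q) − μ₂ for all q, with μ₁ > 0, μ₂ ≥ 0; (ii) liminf_{|q|→∞} V(q) ≥ h; (iii) 3V'(q)·q + (V''(q)q)·q ≠ 0 for all q ≠ 0. Fix q₀ ∈ ℝⁿ with q₀ ≠ 0 and assume h > μ₂/μ₁. Define g(a) = V(a q₀) + (1/2)V'(a q₀)·(a q₀) for a ≥ 0. Then there exists a > 0 with g(a) = h. -/

import Mathlib

/-!
Along the ray a ↦ a • q₀ the function g is continuous. At a = 0 the virial inequality gives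
μ₁ V(0) ≤ μ₂, so g(0) = V(0) < h. Far out on the ray V ≥ h - ε, and the virial inequality gives
g ≥ (1 + μ₁/2) V - μ₂/2 ≥ h once ε = (μ₁ h - μ₂)/(2 + μ₁). The intermediate value theorem on
the interval (0, b] finishes the proof.
-/

open scoped RealInnerProductSpace

theorem exists_pos_le_norm_smul {E : Type*} [NormedAddCommGroup E] [NormedSpace ℝ E]
    {q : E} (hq : q ≠ 0) (M : ℝ) : ∃ b : ℝ, 0 < b ∧ M ≤ ‖b • q‖ := by
  have hq' : 0 < ‖q‖ := norm_pos_iff.mpr hq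
  refine ⟨|M| / ‖q‖ + 1, by positivity, ?_⟩
  rw [norm_smul, Real.norm_of_nonneg (by positivity), add_mul, div_mul_cancel₀ _ hq'.ne']
  linarith [le_abs_self M]

section

variable {E : Type*} [NormedAddCommGroup E] [InnerProductSpace ℝ E] [CompleteSpace E]
  {V : E → ℝ}

/-- The paper's `g` is `a ↦ virialEnergy V (a • q₀)`. -/
noncomputable def virialEnergy (V : E → ℝ) (q : E) : ℝ :=
  V q + (1/2) * ⟪gradient V q, q⟫

theorem ContDiff.continuous_gradient (hV : ContDiff ℝ 1 V) : Continuous (gradient V) :=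
  (InnerProductSpace.toDual ℝ E).symm.continuous.comp (hV.continuous_fderiv one_ne_zero)

theorem ContDiff.continuous_virialEnergy (hV : ContDiff ℝ 1 V) :
    Continuous (virialEnergy V) :=
  hV.continuous.add (continuous_const.mul (hV.continuous_gradient.inner continuous_id))

theorem virialEnergy_zero : virialEnergy V 0 = V 0 := by
  simp [virialEnergy]

theorem le_virialEnergy {μ₁ μ₂ : ℝ} {q : E} (hq : ⟪gradient V q, q⟫ ≥ μ₁ * V q - μ₂) :
    (1 + μ₁ / 2) * V q - μ₂ / 2 ≤ virialEnergy V q := by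
  unfold virialEnergy
  linarith

theorem exists_pos_le_virialEnergy_smul {μ₁ μ₂ h : ℝ} (hμ₁ : 0 < μ₁)
    (hB₂ : ∀ q, ⟪gradient V q, q⟫ ≥ μ₁ * V q - μ₂)
    (hB₃ : ∀ ε > 0, ∃ M : ℝ, ∀ q : E, M ≤ ‖q‖ → h - ε ≤ V q)
    {q₀ : E} (hq₀ : q₀ ≠ 0) (hh : μ₂ < μ₁ * h) :
    ∃ b : ℝ, 0 < b ∧ h ≤ virialEnergy V (b • q₀) := by
  set ε := (μ₁ * h - μ₂) / (2 + μ₁)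
  have hε : ε * (2 + μ₁) = μ₁ * h - μ₂ := div_mul_cancel₀ _ (by positivity)
  obtain ⟨M, hM⟩ := hB₃ ε (div_pos (by linarith) (by linarith))
  obtain ⟨b, hb, hbM⟩ := exists_pos_le_norm_smul hq₀ M
  have hV : (1 + μ₁ / 2) * (h - ε) ≤ (1 + μ₁ / 2) * V (b • q₀) :=
    mul_le_mul_of_nonneg_left (hM _ hbM) (by linarith)
  exact ⟨b, hb, by linarith [le_virialEnergy (hB₂ (b • q₀))]⟩

end

theorem stmt_3_general (n : ℕ) (V : EuclideanSpace ℝ (Fin n) → ℝ) (μ₁ μ₂ h : ℝ)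
    (hV : ContDiff ℝ 1 V)
    (hμ₁ : 0 < μ₁)
    (hB₂ : ∀ q, ⟪gradient V q, q⟫ ≥ μ₁ * V q - μ₂)
    (hB₃ : ∀ ε > 0, ∃ M : ℝ, ∀ q : EuclideanSpace ℝ (Fin n), M ≤ ‖q‖ → h - ε ≤ V q)
    (q₀ : EuclideanSpace ℝ (Fin n)) (hq₀ : q₀ ≠ 0)
    (hh : h > μ₂ / μ₁) :
    ∃ a : ℝ, a > 0 ∧
      V (a • q₀) + (1/2) * ⟪gradient V (a • q₀), a • q₀⟫ = h := by
  have hμh : μ₂ < μ₁ * h := by rwa [gt_iff_lt, div_lt_iff₀ hμ₁, mul_comm] at hh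
  set g : ℝ → ℝ := fun a => virialEnergy V (a • q₀)
  have hg : Continuous g := hV.continuous_virialEnergy.comp (continuous_id.smul continuous_const)
  have hg0 : g 0 < h := by
    have hV0 : μ₁ * V 0 ≤ μ₂ := by simpa using hB₂ 0
    simp only [g, zero_smul, virialEnergy_zero]
    exact lt_of_mul_lt_mul_left (hV0.trans_lt hμh) hμ₁.le
  obtain ⟨b, hb, hgb⟩ := exists_pos_le_virialEnergy_smul hμ₁ hB₂ hB₃ hq₀ hμh
  obtain ⟨a, ⟨ha, -⟩, hga⟩ :=
    intermediate_value_Ioc (f := g) hb.le hg.continuousOn ⟨hg0, hgb⟩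
  exact ⟨a, ha, hga⟩

theorem stmt_3 (n : ℕ) (V : EuclideanSpace ℝ (Fin n) → ℝ) (μ₁ μ₂ h : ℝ)
    (hV : ContDiff ℝ 1 V)
    (hV2 : ∀ q : EuclideanSpace ℝ (Fin n), q ≠ 0 → DifferentiableAt ℝ (gradient V) q)
    (hμ₁ : 0 < μ₁) (hμ₂ : 0 ≤ μ₂)
    (hB₂ : ∀ q, ⟪gradient V q, q⟫ ≥ μ₁ * V q - μ₂)
    (hB₃ : ∀ ε > 0, ∃ M : ℝ, ∀ q : EuclideanSpace ℝ (Fin n), M ≤ ‖q‖ → h - ε ≤ V q)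
    (hB₄ : ∀ q : EuclideanSpace ℝ (Fin n), q ≠ 0 →
      3 * ⟪gradient V q, q⟫ + ⟪fderiv ℝ (gradient V) q q, q⟫ ≠ 0)
    (q₀ : EuclideanSpace ℝ (Fin n)) (hq₀ : q₀ ≠ 0)
    (hh : h > μ₂ / μ₁) :
    ∃ a : ℝ, a > 0 ∧
      V (a • q₀) + (1/2) * ⟪gradient V (a • q₀), a • q₀⟫ = h :=
  stmt_3_general n V μ₁ μ₂ h hV hμ₁ hB₂ hB₃ q₀ hq₀ hh
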